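/- Suppose κ is a regular uncountable cardinal, κ ≤ λ, and cf(λ) ≥ κ. Then every club of [λ]^{<κ} contains an unbounded subset which is not stationary. -/

import Mathlib

open Cardinal Set

noncomputable section

/-- A finitary function on the ordinals: an arity `n` together with an
`n`-ary function on ordinals. -/
abbrev FinFun := Σ n : ℕ, (Fin n → Ordinal.{0}) → Ordinal.{0}

/-- `[λ]^{<κ}`: the collection of subsets of `λ` (viewed as the set of
ordinals `< λ`) of cardinality `< κ`. -/
def smallSubsets (lam kap : Cardinal.{0}) : Set (Set Ordinal.{0}) :=
  {a | (∀ x ∈ a, x < lam.ord) ∧ Cardinal.mk ↥a < Cardinal.lift.{1} kap}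

/-- The countable family `F` consists of finitary functions *on `λ`*. -/
def FamOn (lam : Cardinal.{0}) (F : Set FinFun) : Prop :=
  ∀ f ∈ F, ∀ x : Fin f.1 → Ordinal.{0}, (∀ i, x i < lam.ord) → f.2 x < lam.ord

/-- The club `C_F` of `[λ]^{<κ}` associated to a family `F` of finitary
functions on `λ`: the members `a` of `[λ]^{<κ}` closed under every function
of `F` and such that `a ∩ κ` is an ordinal (an initial segment of `κ`). -/
def clubOf (lam kap : Cardinal.{0}) (F : Set FinFun) : Set (Set Ordinal.{0}) :=
  {a | a ∈ smallSubsets lam kap ∧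
    (∀ f ∈ F, ∀ x : Fin f.1 → Ordinal.{0}, (∀ i, x i ∈ a) → f.2 x ∈ a) ∧
    ∃ β < kap.ord, a ∩ Set.Iio kap.ord = Set.Iio β}

/-- `C` is a club of `[λ]^{<κ}`. -/
def IsClubPK (lam kap : Cardinal.{0}) (C : Set (Set Ordinal.{0})) : Prop :=
  ∃ F : Set FinFun, F.Countable ∧ FamOn lam F ∧ C = clubOf lam kap F

/-- `S` is a stationary subset of `[λ]^{<κ}`: it meets every club. -/
def IsStationaryPK (lam kap : Cardinal.{0}) (S : Set (Set Ordinal.{0})) : Prop :=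
  ∀ C, IsClubPK lam kap C → (S ∩ C).Nonempty

/-- `S` is an unbounded subset of `[λ]^{<κ}`: every member of `[λ]^{<κ}`
is contained in some member of `S`. -/
def IsUnbounded (lam kap : Cardinal.{0}) (S : Set (Set Ordinal.{0})) : Prop :=
  ∀ b ∈ smallSubsets lam kap, ∃ a ∈ S, b ⊆ a

/-- The club filter `E_{λ,κ}`: the filter generated by the clubs of
`[λ]^{<κ}`. -/
def clubFilter (lam kap : Cardinal.{0}) : Filter (Set Ordinal.{0}) :=
  Filter.generate {C | IsClubPK lam kap C}

/-!
Write the club as `C_F`. For `y < λ` the hull of `[0, y]` under `F` (interleaved with filling in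
initial segments of `κ`) has size `< λ`, so some `g y < λ` escapes it. The members of `C_F` not
closed under `g` miss the club `C_{F ∪ {g}}`, so they form a nonstationary set. They are unbounded:
given `b ∈ [λ]^{<κ}`, `y = sup b` is `< λ` because `cf λ ≥ κ`, and the hull of `b ∪ {y}` lies in
`C_F`, but it is contained in the hull of `[0, y]`, so it does not contain `g y`.
-/

universe u v

theorem Cardinal.mk_iUnion_lt_of_aleph0_lt_cof {α : Type u} {ι : Type v} [Countable ι]
    {A : ι → Set α} {μ : Cardinal.{u}} (hμ : ℵ₀ < μ.ord.cof) (hA : ∀ i, #(A i) < μ) :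
    #(⋃ i, A i) < μ := by
  have hcof : ℵ₀ < (lift.{v} μ).ord.cof := by
    simpa [← Cardinal.lift_ord, ← Ordinal.lift_cof] using hμ
  have hι : lift.{u} #ι < (lift.{v} μ).ord.cof :=
    lt_of_le_of_lt (by simp [mk_le_aleph0]) hcof
  have hsup : ⨆ i, lift.{v} #(A i) < lift.{v} μ :=
    lift_iSup_lt_of_lt_cof_ord (by rw [lift_umax.{v, u}]; simpa using hι)
      fun i => lift_lt.2 (hA i)
  rw [← lift_lt.{u, v}]
  exact (mk_iUnion_le_lift A).trans_lt <|
    mul_lt_of_lt (hcof.le.trans (Ordinal.cof_ord_le _)) (hι.trans_le (Ordinal.cof_ord_le _)) hsup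

theorem Cardinal.mk_image_pi_le {α β : Type u} {n : ℕ} (g : (Fin n → α) → β) (X : Set α) :
    #(g '' {x | ∀ i, x i ∈ X}) ≤ max #X ℵ₀ := by
  have hrange : g '' {x | ∀ i, x i ∈ X} = range fun x : Fin n → X => g fun i => x i := by
    ext z
    constructor
    · rintro ⟨x, hx, rfl⟩
      exact ⟨fun i => ⟨x i, hx i⟩, rfl⟩
    · rintro ⟨x, rfl⟩
      exact ⟨_, fun i => (x i).2, rfl⟩
  calc #(g '' {x | ∀ i, x i ∈ X}) ≤ #(Fin n → X) := hrange ▸ mk_range_le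
    _ = #X ^ (n : Cardinal) := by simp
    _ ≤ max #X ℵ₀ := power_nat_le_max

theorem Ordinal.exists_lowerClosure_eq_Iio {S : Set Ordinal.{u}} {a : Ordinal.{u}}
    (hSa : S ⊆ Iio a) (hS : #S < (Ordinal.lift.{u + 1} a).cof) :
    ∃ β < a, (lowerClosure S : Set Ordinal) = Iio β := by
  have : Small.{u} S := small_subset hSa
  refine ⟨⨆ x : S, (x : Ordinal) + 1,
    lift_iSup_add_one_lt_of_lt_cof (by rwa [Cardinal.lift_id'.{u, u + 1}]) fun x => hSa x.2, ?_⟩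
  ext y
  simp [mem_lowerClosure]

def clubHullStep (F : Set FinFun) (c : Ordinal.{0}) (X : Set Ordinal.{0}) : Set Ordinal.{0} :=
  X ∪ (⋃ f ∈ F, f.2 '' {x | ∀ i, x i ∈ X}) ∪ lowerClosure (X ∩ Iio c)

/-- The least superset of `X` closed under `F` whose part below `c` is an initial segment. -/
def clubHull (F : Set FinFun) (c : Ordinal.{0}) (X : Set Ordinal.{0}) : Set Ordinal.{0} :=
  ⋃ n, (clubHullStep F c)^[n] X

section ClubHull

variable {F : Set FinFun} {c : Ordinal.{0}} {X : Set Ordinal.{0}}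

theorem subset_clubHullStep (X : Set Ordinal.{0}) : X ⊆ clubHullStep F c X :=
  fun _ hx => Or.inl (Or.inl hx)

theorem clubHullStep_mono : Monotone (clubHullStep F c) := fun _ _ h =>
  union_subset_union
    (union_subset_union h (iUnion₂_mono fun _ _ => image_mono fun _ hx i => h (hx i)))
    (lowerClosure_mono (inter_subset_inter_left _ h))

theorem monotone_iterate_clubHullStep (X : Set Ordinal.{0}) :
    Monotone fun n => (clubHullStep F c)^[n] X :=
  monotone_nat_of_le_succ fun n => by
    rw [Function.iterate_succ_apply']
    exact subset_clubHullStep _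

theorem subset_clubHull : X ⊆ clubHull F c X :=
  subset_iUnion (fun n => (clubHullStep F c)^[n] X) 0

theorem clubHull_mono : Monotone (clubHull F c) := fun _ _ h =>
  iUnion_mono fun n => clubHullStep_mono.iterate n h

theorem apply_mem_clubHull {f : FinFun} (hf : f ∈ F) {x : Fin f.1 → Ordinal.{0}}
    (hx : ∀ i, x i ∈ clubHull F c X) : f.2 x ∈ clubHull F c X := by
  choose m hm using fun i => mem_iUnion.1 (hx i)
  have hx_stage : ∀ i, x i ∈ (clubHullStep F c)^[Finset.univ.sup m] X := fun i =>
    monotone_iterate_clubHullStep X (Finset.le_sup (Finset.mem_univ i)) (hm i)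
  refine mem_iUnion.2 ⟨Finset.univ.sup m + 1, ?_⟩
  rw [Function.iterate_succ_apply']
  exact Or.inl (Or.inr (mem_biUnion hf ⟨x, hx_stage, rfl⟩))

theorem isLowerSet_clubHull_inter_Iio : IsLowerSet (clubHull F c X ∩ Iio c) := by
  rintro x y hyx ⟨hx, hxc⟩
  obtain ⟨n, hn⟩ := mem_iUnion.1 hx
  refine ⟨mem_iUnion.2 ⟨n + 1, ?_⟩, hyx.trans_lt hxc⟩
  rw [Function.iterate_succ_apply']
  exact Or.inr (mem_lowerClosure.2 ⟨x, ⟨hn, hxc⟩, hyx⟩)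

theorem clubHull_subset_Iio {lam : Cardinal.{0}} (hF : FamOn lam F) (hc : c ≤ lam.ord)
    (hX : X ⊆ Iio lam.ord) : clubHull F c X ⊆ Iio lam.ord := by
  refine iUnion_subset fun n => ?_
  induction n with
  | zero => exact hX
  | succ n ih =>
    rw [Function.iterate_succ_apply']
    rintro y ((hy | hy) | ⟨x, ⟨-, hxc⟩, hyx⟩)
    · exact ih hy
    · obtain ⟨f, hf, x, hx, rfl⟩ := mem_iUnion₂.1 hy
      exact hF f hf x fun i => ih (hx i)
    · exact hyx.trans_lt (hxc.trans_le hc)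

end ClubHull

section Cardinality

variable {F : Set FinFun} {kap : Cardinal.{0}} {μ : Cardinal.{1}} {X : Set Ordinal.{0}}

theorem mk_lowerClosure_inter_Iio_lt (hreg : kap.IsRegular) (hμ : lift.{1} kap ≤ μ)
    (hX : #X < μ) : #(lowerClosure (X ∩ Iio kap.ord) : Set Ordinal.{0}) < μ := by
  rcases lt_or_ge #X (lift.{1} kap) with hXk | hkX
  · have hcof : #(X ∩ Iio kap.ord : Set Ordinal) < (Ordinal.lift.{1} kap.ord).cof := by
      rw [← Ordinal.lift_cof, hreg.cof_ord]
      exact (mk_le_mk_of_subset inter_subset_left).trans_lt hXk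
    obtain ⟨β, hβ, hcl⟩ := Ordinal.exists_lowerClosure_eq_Iio inter_subset_right hcof
    rw [hcl, mk_Iio_ordinal]
    exact (lift_lt.2 (lt_ord.1 hβ)).trans_le hμ
  · calc #(lowerClosure (X ∩ Iio kap.ord) : Set Ordinal.{0}) ≤ #(Iio kap.ord) :=
          mk_le_mk_of_subset (lowerClosure_le (t := LowerSet.Iio kap.ord) |>.2 inter_subset_right)
      _ = lift.{1} kap := by rw [mk_Iio_ordinal, card_ord]
      _ < μ := hkX.trans_lt hX

theorem mk_clubHullStep_lt (hreg : kap.IsRegular) (hμ : lift.{1} kap ≤ μ)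
    (hcof : ℵ₀ < μ.ord.cof) (hF : F.Countable) (hX : #X < μ) :
    #(clubHullStep F kap.ord X) < μ := by
  have hμ₀ : ℵ₀ < μ := hcof.trans_le (Ordinal.cof_ord_le μ)
  have : Countable F := hF.to_subtype
  have himage : #(⋃ f ∈ F, f.2 '' {x | ∀ i, x i ∈ X}) < μ := by
    rw [biUnion_eq_iUnion]
    exact mk_iUnion_lt_of_aleph0_lt_cof hcof fun f =>
      (mk_image_pi_le _ X).trans_lt (max_lt hX hμ₀)
  refine (mk_union_le _ _).trans_lt <|
    add_lt_of_lt hμ₀.le ?_ (mk_lowerClosure_inter_Iio_lt hreg hμ hX)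
  exact (mk_union_le _ _).trans_lt (add_lt_of_lt hμ₀.le hX himage)

theorem mk_clubHull_lt (hreg : kap.IsRegular) (hμ : lift.{1} kap ≤ μ)
    (hcof : ℵ₀ < μ.ord.cof) (hF : F.Countable) (hX : #X < μ) :
    #(clubHull F kap.ord X) < μ := by
  refine mk_iUnion_lt_of_aleph0_lt_cof hcof fun n => ?_
  induction n with
  | zero => exact hX
  | succ n ih =>
    rw [Function.iterate_succ_apply']
    exact mk_clubHullStep_lt hreg hμ hcof hF ih

end Cardinality

section Club

variable {F : Set FinFun} {lam kap : Cardinal.{0}}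

theorem aleph0_lt_cof_lift_ord (hreg : kap.IsRegular) (hunc : ℵ₀ < kap) :
    ℵ₀ < (lift.{1} kap).ord.cof := by
  rw [hreg.lift.cof_ord, ← lift_aleph0.{1, 0}, lift_lt]
  exact hunc

theorem clubHull_mem_clubOf (hreg : kap.IsRegular) (hunc : ℵ₀ < kap) (hkl : kap ≤ lam)
    (hF : F.Countable) (hFon : FamOn lam F) {X : Set Ordinal.{0}} (hX : X ⊆ Iio lam.ord)
    (hXk : #X < lift.{1} kap) : clubHull F kap.ord X ∈ clubOf lam kap F := by
  have hsmall : #(clubHull F kap.ord X) < lift.{1} kap :=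
    mk_clubHull_lt hreg le_rfl (aleph0_lt_cof_lift_ord hreg hunc) hF hXk
  have hcof : #(clubHull F kap.ord X ∩ Iio kap.ord : Set Ordinal) <
      (Ordinal.lift.{1} kap.ord).cof := by
    rw [← Ordinal.lift_cof, hreg.cof_ord]
    exact (mk_le_mk_of_subset inter_subset_left).trans_lt hsmall
  obtain ⟨β, hβ, hcl⟩ := Ordinal.exists_lowerClosure_eq_Iio inter_subset_right hcof
  refine ⟨⟨clubHull_subset_Iio hFon (ord_le_ord.2 hkl) hX, hsmall⟩,
    fun _ hf _ hx => apply_mem_clubHull hf hx, β, hβ, ?_⟩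
  rwa [isLowerSet_clubHull_inter_Iio.lowerClosure] at hcl

theorem exists_lt_ord_notMem_clubHull_Iic (hreg : kap.IsRegular) (hunc : ℵ₀ < kap)
    (hkl : kap ≤ lam) (hcof : kap ≤ lam.ord.cof) (hF : F.Countable) {y : Ordinal.{0}}
    (hy : y < lam.ord) : ∃ z < lam.ord, z ∉ clubHull F kap.ord (Iic y) := by
  have hcof' : ℵ₀ < (lift.{1} lam).ord.cof := by
    rw [← lift_ord, ← Ordinal.lift_cof, ← lift_aleph0.{1, 0}, lift_lt]
    exact hunc.trans_le hcof
  have hIic : #(Iic y) < lift.{1} lam := by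
    rw [← Order.Iio_succ, mk_Iio_ordinal, lift_lt, ← lt_ord]
    exact (isSuccLimit_ord (hunc.le.trans hkl)).succ_lt hy
  have hsmall : #(clubHull F kap.ord (Iic y)) < lift.{1} lam :=
    mk_clubHull_lt hreg (lift_le.2 hkl) hcof' hF hIic
  by_contra! hall
  have hsub : Iio lam.ord ⊆ clubHull F kap.ord (Iic y) := fun z hz => hall z hz
  refine (mk_le_mk_of_subset hsub).not_gt ?_
  rwa [mk_Iio_ordinal, card_ord]

theorem isUnbounded_clubOf_diff_insert (hreg : kap.IsRegular) (hunc : ℵ₀ < kap)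
    (hkl : kap ≤ lam) (hcof : kap ≤ lam.ord.cof) (hF : F.Countable) (hFon : FamOn lam F)
    {g : Ordinal.{0} → Ordinal.{0}} (hg : ∀ y < lam.ord, g y ∉ clubHull F kap.ord (Iic y)) :
    IsUnbounded lam kap (clubOf lam kap F \ clubOf lam kap (insert ⟨1, fun x => g (x 0)⟩ F)) := by
  rintro b ⟨hb, hbk⟩
  have hbcof : #b < (Ordinal.lift.{1} lam.ord).cof := by
    rw [← Ordinal.lift_cof]
    exact hbk.trans_le (lift_le.2 hcof)
  have hy : sSup b < lam.ord := Ordinal.sSup_lt_of_lt_cof hbcof hb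
  have hby : b ⊆ Iic (sSup b) := fun x hx => le_csSup ⟨lam.ord, fun x hx => (hb x hx).le⟩ hx
  set X := insert (sSup b) b
  have hX : X ⊆ Iio lam.ord := insert_subset hy hb
  have hXk : #X < lift.{1} kap :=
    mk_insert_le.trans_lt <| add_one_lt_of_lt (by simpa using hunc.le) hbk
  refine ⟨clubHull F kap.ord X, ⟨clubHull_mem_clubOf hreg hunc hkl hF hFon hX hXk, fun hG => ?_⟩,
    (subset_insert _ b).trans subset_clubHull⟩
  have hgy : g (sSup b) ∈ clubHull F kap.ord X :=
    hG.2.1 _ (mem_insert _ F) (fun _ => sSup b) fun _ => subset_clubHull (mem_insert _ b)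
  exact hg _ hy (clubHull_mono (insert_subset self_mem_Iic hby) hgy)

theorem not_isStationaryPK_diff {C : Set (Set Ordinal.{0})} (hC : IsClubPK lam kap C)
    (S : Set (Set Ordinal.{0})) : ¬ IsStationaryPK lam kap (S \ C) := fun hS => by
  obtain ⟨a, ⟨-, haC⟩, ha⟩ := hS C hC
  exact haC ha

end Club

/-- If `κ` is regular uncountable, `κ ≤ λ` and `cf(λ) ≥ κ`, then every
club of `[λ]^{<κ}` contains an unbounded subset which is not stationary. -/
theorem club_contains_unbounded_nonstationary_of_cof_ge
    (lam kap : Cardinal.{0}) (hreg : kap.IsRegular) (hunc : ℵ₀ < kap)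
    (hkl : kap ≤ lam) (hcof : kap ≤ lam.ord.cof) :
    ∀ C, IsClubPK lam kap C →
      ∃ U ⊆ C, IsUnbounded lam kap U ∧ ¬ IsStationaryPK lam kap U := by
  rintro _ ⟨F, hF, hFon, rfl⟩
  choose! g hg_lt hg_escape using fun y (hy : y < lam.ord) =>
    exists_lt_ord_notMem_clubHull_Iic hreg hunc hkl hcof hF hy
  have hGon : FamOn lam (insert ⟨1, fun x => g (x 0)⟩ F) := by
    rintro f (rfl | hf) x hx
    · exact hg_lt _ (hx 0)
    · exact hFon f hf x hx
  exact ⟨_, sdiff_subset, isUnbounded_clubOf_diff_insert hreg hunc hkl hcof hF hFon hg_escape,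
    not_isStationaryPK_diff ⟨_, hF.insert _, hGon, rfl⟩ _⟩
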